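/- arXiv:1911.02269 — 6 statements merged into one kernel-verified Lean document; each statement's English description precedes it below -/
import Mathlib

section
/- Let G be a compact Hausdorff topological group and let (H_m)_{m ∈ ℕ} be a countable family of closed subgroups of G whose union is all of G. Then there exists an index m such that H_m is an open subgroup of G; in particular, H_m has finite index in G. -/
/-! A compact topological group is a Baire space, so one of the closed sets `H m` has nonempty
interior, and a subgroup with an interior point is open. The cosets of an open subgroup form a
disjoint open cover of the compact group, hence there are finitely many of them. -/

open Set

namespace Subgroup

variable {G : Type*} [Group G] [TopologicalSpace G] [SeparatelyContinuousMul G]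

theorem exists_isOpen_of_iUnion_eq_univ {ι : Type*} [Countable ι] [BaireSpace G]
    {H : ι → Subgroup G} (hclosed : ∀ i, IsClosed (H i : Set G))
    (hcover : ⋃ i, (H i : Set G) = univ) : ∃ i, IsOpen (H i : Set G) := by
  obtain ⟨i, g, hg⟩ := nonempty_interior_of_iUnion_of_closed hclosed hcover
  exact ⟨i, (H i).isOpen_of_mem_nhds (mem_interior_iff_mem_nhds.1 hg)⟩

theorem finiteIndex_of_isOpen [CompactSpace G] (H : Subgroup G) (hH : IsOpen (H : Set G)) :
    H.FiniteIndex :=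
  have := H.quotient_finite_of_isOpen hH
  finiteIndex_of_finite_quotient

end Subgroup

theorem closed_subgroup_cover_exists_open_general
    {G : Type*} [Group G] [TopologicalSpace G] [IsTopologicalGroup G]
    [CompactSpace G]
    (H : ℕ → Subgroup G)
    (hclosed : ∀ m, IsClosed (H m : Set G))
    (hcover : ∀ g : G, ∃ m, g ∈ H m) :
    ∃ m, IsOpen (H m : Set G) ∧ (H m).FiniteIndex := by
  obtain ⟨m, hm⟩ := Subgroup.exists_isOpen_of_iUnion_eq_univ hclosed (iUnion_eq_univ_iff.2 hcover)
  exact ⟨m, hm, (H m).finiteIndex_of_isOpen hm⟩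

/-- Let `G` be a compact Hausdorff topological group and let
`(H m)_{m ∈ ℕ}` be a countable family of closed subgroups of `G` whose union is
all of `G`.  Then some `H m` is an open subgroup of `G`; in particular it has
finite index in `G`. -/
theorem closed_subgroup_cover_exists_open
    {G : Type*} [Group G] [TopologicalSpace G] [IsTopologicalGroup G]
    [CompactSpace G] [T2Space G]
    (H : ℕ → Subgroup G)
    (hclosed : ∀ m, IsClosed (H m : Set G))
    (hcover : ∀ g : G, ∃ m, g ∈ H m) :
    ∃ m, IsOpen (H m : Set G) ∧ (H m).FiniteIndex :=
  closed_subgroup_cover_exists_open_general H hclosed hcover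
end

section
/- Let G be a compact Hausdorff topological group which is the union of a family (H_i)_{i ∈ I} of closed subgroups indexed by a countable set I, and assume the family is directed under inclusion, i.e. for all i, j ∈ I there exists k ∈ I with H_i ⊆ H_k and H_j ⊆ H_k. Then G = H_i for some i ∈ I. -/
/-!
By the Baire category theorem one of the countably many closed subgroups `H i₀` has nonempty
interior, hence is open. Every `H k` containing `H i₀` is then open too, and these form a
directed open cover of the compact group, so a single one of them is everything.
-/

open Set

namespace Subgroup

variable {G : Type*} [Group G] [TopologicalSpace G] [SeparatelyContinuousMul G] {I : Type*}

theorem exists_isOpen_of_forall_mem_of_isClosed [BaireSpace G] [Countable I]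
    (H : I → Subgroup G) (hclosed : ∀ i, IsClosed (H i : Set G))
    (hcover : ∀ g : G, ∃ i, g ∈ H i) : ∃ i, IsOpen (H i : Set G) := by
  obtain ⟨i, g, hg⟩ :=
    nonempty_interior_of_iUnion_of_closed hclosed (iUnion_eq_univ_iff.2 hcover)
  exact ⟨i, (H i).isOpen_of_mem_nhds (mem_interior_iff_mem_nhds.1 hg)⟩

theorem exists_eq_top_of_directed_of_isOpen [CompactSpace G]
    (H : I → Subgroup G) (hdir : Directed (· ≤ ·) H) (hcover : ∀ g : G, ∃ i, g ∈ H i)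
    {i₀ : I} (hopen : IsOpen (H i₀ : Set G)) : ∃ i, H i = ⊤ := by
  let U : {k // H i₀ ≤ H k} → Set G := fun k ↦ H k
  have : Nonempty {k // H i₀ ≤ H k} := ⟨⟨i₀, le_rfl⟩⟩
  have hU_open : ∀ k, IsOpen (U k) := fun k ↦ isOpen_mono k.2 hopen
  have hU_cover : univ ⊆ ⋃ k, U k := fun g _ ↦ by
    obtain ⟨j, hj⟩ := hcover g
    obtain ⟨k, hi₀k, hjk⟩ := hdir i₀ j
    exact mem_iUnion.2 ⟨⟨k, hi₀k⟩, hjk hj⟩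
  have hU_dir : Directed (· ⊆ ·) U := fun a b ↦ by
    obtain ⟨k, hak, hbk⟩ := hdir a b
    exact ⟨⟨k, a.2.trans hak⟩, hak, hbk⟩
  obtain ⟨k, hk⟩ := isCompact_univ.elim_directed_cover U hU_open hU_cover hU_dir
  exact ⟨k, (eq_top_iff' _).2 fun g ↦ hk (mem_univ g)⟩

end Subgroup

theorem directed_closed_subgroup_cover_eq_top_general
    {G : Type*} [Group G] [TopologicalSpace G] [IsTopologicalGroup G]
    [CompactSpace G]
    {I : Type*} [Countable I]
    (H : I → Subgroup G)
    (hclosed : ∀ i, IsClosed (H i : Set G))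
    (hdir : ∀ i j : I, ∃ k : I, H i ≤ H k ∧ H j ≤ H k)
    (hcover : ∀ g : G, ∃ i, g ∈ H i) :
    ∃ i, H i = ⊤ := by
  obtain ⟨i₀, hopen⟩ := Subgroup.exists_isOpen_of_forall_mem_of_isClosed H hclosed hcover
  exact Subgroup.exists_eq_top_of_directed_of_isOpen H hdir hcover hopen

/-- Let `G` be a compact Hausdorff topological group which is the
union of a countable family `(H i)_{i ∈ I}` of closed subgroups that is directed
under inclusion.  Then `G = H i` for some `i`. -/
theorem directed_closed_subgroup_cover_eq_top
    {G : Type*} [Group G] [TopologicalSpace G] [IsTopologicalGroup G]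
    [CompactSpace G] [T2Space G]
    {I : Type*} [Countable I]
    (H : I → Subgroup G)
    (hclosed : ∀ i, IsClosed (H i : Set G))
    (hdir : ∀ i j : I, ∃ k : I, H i ≤ H k ∧ H j ≤ H k)
    (hcover : ∀ g : G, ∃ i, g ∈ H i) :
    ∃ i, H i = ⊤ :=
  directed_closed_subgroup_cover_eq_top_general H hclosed hdir hcover
end

section
/- Every compact subgroup of the multiplicative group Q̄_ℓ^× all of whose elements are roots of unity is finite. -/
/-!
The norm of `K` is ultrametric and `‖ℓ‖ = ℓ⁻¹ < 1`. If `‖x - 1‖ < ‖ℓ‖` then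
`‖x ^ ℓ - 1‖ = ‖ℓ‖ * ‖x - 1‖`, so the distances `‖x ^ ℓ ^ k - 1‖` of a root of unity `x ≠ 1`
would be pairwise distinct, although `x` has only finitely many powers. Hence the ball of
radius `‖ℓ‖` around `1` meets `S` only in `1`: `S` is a discrete compact group.
-/

theorem Subgroup.finite_of_isCompact_of_isOpen_inter_eq_one {G : Type*} [Group G]
    [TopologicalSpace G] [IsTopologicalGroup G] {S : Subgroup G} (hS : IsCompact (S : Set G))
    {U : Set G} (hU : IsOpen U) (hU1 : (1 : G) ∈ U) (hUS : ∀ x ∈ S, x ∈ U → x = 1) :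
    (S : Set G).Finite := by
  have hsingleton : ({1} : Set S) = Subtype.val ⁻¹' U := by
    ext x
    exact ⟨fun hx => hx ▸ hU1, fun hx => Subtype.ext (hUS x x.2 hx)⟩
  have : DiscreteTopology S :=
    discreteTopology_of_isOpen_singleton_one (hsingleton ▸ hU.preimage continuous_subtype_val)
  exact hS.finite (isDiscrete_iff_discreteTopology.mpr this)

namespace IsUltrametricDist

variable {K : Type*} [NormedDivisionRing K] [IsUltrametricDist K]

theorem norm_pow_sub_one_le {x : K} (hx : ‖x‖ ≤ 1) (n : ℕ) : ‖x ^ n - 1‖ ≤ ‖x - 1‖ := by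
  have hgeom : ‖∑ i ∈ Finset.range n, x ^ i‖ ≤ 1 :=
    norm_sum_le_of_forall_le_of_nonneg zero_le_one fun i _ => by
      simpa only [norm_pow] using pow_le_one₀ (norm_nonneg x) hx
  calc ‖x ^ n - 1‖ = ‖∑ i ∈ Finset.range n, x ^ i‖ * ‖x - 1‖ := by rw [← norm_mul, geom_sum_mul]
    _ ≤ ‖x - 1‖ := mul_le_of_le_one_left (norm_nonneg _) hgeom

theorem norm_pow_sub_one_eq {n : ℕ} {x : K} (hx : ‖x - 1‖ < ‖(n : K)‖) :
    ‖x ^ n - 1‖ = ‖(n : K)‖ * ‖x - 1‖ := by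
  have hx1 : ‖x‖ ≤ 1 := by
    simpa [hx.le.trans (norm_natCast_le_one K n)] using
      norm_add_le_max (x - 1) 1
  -- `∑ x ^ i = n + ∑ (x ^ i - 1)`, and the second summand is too small to matter.
  have herror : ‖∑ i ∈ Finset.range n, (x ^ i - 1)‖ < ‖(n : K)‖ :=
    (norm_sum_le_of_forall_le_of_nonneg (norm_nonneg _) fun i _ =>
      norm_pow_sub_one_le hx1 i).trans_lt hx
  have hgeom : ‖∑ i ∈ Finset.range n, x ^ i‖ = ‖(n : K)‖ := by
    have : ∑ i ∈ Finset.range n, x ^ i = n + ∑ i ∈ Finset.range n, (x ^ i - 1) := by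
      simp [Finset.sum_sub_distrib]
    rw [this, norm_add_eq_max_of_norm_ne_norm herror.ne', max_eq_left herror.le]
  rw [← geom_sum_mul, norm_mul, hgeom]

theorem norm_pow_pow_sub_one_eq {n : ℕ} {x : K} (hx : ‖x - 1‖ < ‖(n : K)‖) (k : ℕ) :
    ‖x ^ n ^ k - 1‖ = ‖(n : K)‖ ^ k * ‖x - 1‖ := by
  induction k with
  | zero => simp
  | succ k ih =>
    have hsmall : ‖x ^ n ^ k - 1‖ < ‖(n : K)‖ := by
      rw [ih]
      exact (mul_le_of_le_one_left (norm_nonneg _)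
        (pow_le_one₀ (norm_nonneg _) (norm_natCast_le_one K n))).trans_lt hx
    rw [pow_succ, pow_mul, norm_pow_sub_one_eq hsmall, ih]
    ring

theorem eq_one_of_isOfFinOrder_of_norm_sub_one_lt {n : ℕ} (hn : ‖(n : K)‖ < 1) {x : K}
    (hx : ‖x - 1‖ < ‖(n : K)‖) (hfin : IsOfFinOrder x) : x = 1 := by
  by_contra hne
  have hpos : 0 < ‖x - 1‖ := norm_pos_iff.mpr (sub_ne_zero.mpr hne)
  have hinj : Function.Injective fun k : ℕ => x ^ n ^ k := by
    intro i j hij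
    have hanti : StrictAnti fun k : ℕ => ‖(n : K)‖ ^ k * ‖x - 1‖ :=
      (pow_right_strictAnti₀ ((norm_nonneg _).trans_lt hx) hn).mul_const hpos
    apply hanti.injective
    simp only [← norm_pow_pow_sub_one_eq hx]
    exact congrArg (‖· - 1‖) hij
  exact Set.infinite_of_injective_forall_mem hinj (fun k => pow_mem (Submonoid.mem_powers x) _)
    hfin.finite_powers

end IsUltrametricDist

theorem compact_subgroup_of_roots_of_unity_finite_general
    {l : ℕ} [Fact l.Prime]
    (K : Type*) [NormedField K] [Algebra ℚ_[l] K]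
    (hnorm : ∀ x : ℚ_[l], ‖algebraMap ℚ_[l] K x‖ = ‖x‖)
    (S : Subgroup Kˣ) (hS : IsCompact (S : Set Kˣ))
    (htors : ∀ x ∈ S, ∃ n : ℕ, 0 < n ∧ x ^ n = 1) :
    (S : Set Kˣ).Finite := by
  have hl_prime : l.Prime := Fact.out
  have hcast (n : ℕ) : ‖(n : K)‖ = ‖(n : ℚ_[l])‖ := by
    rw [← map_natCast (algebraMap ℚ_[l] K), hnorm]
  have : IsUltrametricDist K := .isUltrametricDist_of_forall_norm_natCast_le_one fun n => by
    simpa only [hcast] using IsUltrametricDist.norm_natCast_le_one ℚ_[l] n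
  have hl : ‖(l : K)‖ = (l : ℝ)⁻¹ := by rw [hcast, Padic.norm_p]
  have hl1 : ‖(l : K)‖ < 1 := hl ▸ inv_lt_one_of_one_lt₀ (mod_cast hl_prime.one_lt)
  refine Subgroup.finite_of_isCompact_of_isOpen_inter_eq_one hS
    ((Metric.isOpen_ball (x := (1 : K)) (ε := ‖(l : K)‖)).preimage Units.continuous_val) ?_ ?_
  · simpa [hl] using hl_prime.pos
  · intro x hx hxU
    obtain ⟨n, hn, hxn⟩ := htors x hx
    have hfin : IsOfFinOrder (x : K) :=
      Units.isOfFinOrder_val.mpr (isOfFinOrder_iff_pow_eq_one.mpr ⟨n, hn, hxn⟩)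
    exact Units.ext <| IsUltrametricDist.eq_one_of_isOfFinOrder_of_norm_sub_one_lt hl1
      (mem_ball_iff_norm.mp hxU) hfin

/-- Every compact subgroup of `Q̄_ℓ^×` all of whose elements are
roots of unity is finite.  Here `K` is an algebraic closure of `ℚ_ℓ`, viewed as a
normed field whose norm extends the `ℓ`-adic absolute value (this determines the
topology, such an extension being unique). -/
theorem compact_subgroup_of_roots_of_unity_finite
    {l : ℕ} [Fact l.Prime]
    (K : Type*) [NormedField K] [Algebra ℚ_[l] K] [IsAlgClosure ℚ_[l] K]
    (hnorm : ∀ x : ℚ_[l], ‖algebraMap ℚ_[l] K x‖ = ‖x‖)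
    (S : Subgroup Kˣ) (hS : IsCompact (S : Set Kˣ))
    (htors : ∀ x ∈ S, ∃ n : ℕ, 0 < n ∧ x ^ n = 1) :
    (S : Set Kˣ).Finite :=
  compact_subgroup_of_roots_of_unity_finite_general K hnorm S hS htors
end

section
/- For every compact Hausdorff abelian topological group G, the group Θ_G is uniquely divisible: it is torsion-free, and for every χ ∈ Θ_G and every integer n ≥ 1 there exists ξ ∈ Θ_G with ξ^n = χ. Equivalently, the canonical map Θ_G → Θ_G ⊗_ℤ ℚ is an isomorphism. -/
/-! Setup: `K` plays the role of `Q̄_ℓ`: an algebraic closure of `ℚ_ℓ`, viewed as a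
normed field whose norm extends the `ℓ`-adic absolute value (this determines the
topology, such an extension being unique).  `mu K` is the group `μ` of roots of
unity in `Kˣ`; for a subextension `E`, `unitBall K E` is the group `O_E^×`
(elements of `E` of absolute value one) and `muSub K E` is `μ_E`, so that
`↥(unitBall K E) ⧸ muSub K E` is `O_E^×/μ_E` with its quotient topology.
`IsTheta` expresses membership in `Θ_G`: a homomorphism `G → Kˣ/μ` factoring as a
continuous homomorphism `G → O_E^×/μ_E` followed by the natural inclusion, for
some finite subextension `E`. -/

/-- The group `μ` of roots of unity of `K`, as a subgroup of `Kˣ`. -/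
def mu (K : Type*) [Field K] : Subgroup Kˣ where
  carrier := {x | ∃ n : ℕ, 0 < n ∧ x ^ n = 1}
  one_mem' := ⟨1, Nat.one_pos, one_pow 1⟩
  mul_mem' := by
    rintro a b ⟨m, hm, ha⟩ ⟨n, hn, hb⟩
    refine ⟨m * n, Nat.mul_pos hm hn, ?_⟩
    rw [mul_pow, pow_mul, ha, one_pow, one_mul, pow_mul', hb, one_pow]
  inv_mem' := by
    rintro a ⟨n, hn, ha⟩
    exact ⟨n, hn, by rw [inv_pow, ha, inv_one]⟩

/-- `O_E^×`, the unit group of the ring of integers `O_E = E ∩ Z̄_ℓ` of a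
subextension `E`, realized as the subgroup of `Kˣ` of elements of `E` of
absolute value `1`. -/
def unitBall (l : ℕ) [Fact l.Prime] (K : Type*) [NormedField K] [Algebra ℚ_[l] K]
    (E : IntermediateField ℚ_[l] K) : Subgroup Kˣ where
  carrier := {x | (x : K) ∈ E ∧ ‖(x : K)‖ = 1}
  one_mem' := ⟨by simpa using E.one_mem, by simp⟩
  mul_mem' := by
    rintro a b ⟨haE, ha⟩ ⟨hbE, hb⟩
    exact ⟨by simpa using E.mul_mem haE hbE, by simp [ha, hb]⟩
  inv_mem' := by
    rintro a ⟨haE, ha⟩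
    exact ⟨by simpa using E.inv_mem haE, by simp [ha]⟩

/-- `μ_E`, the group of roots of unity of `E`, as a subgroup of `O_E^×`. -/
def muSub (l : ℕ) [Fact l.Prime] (K : Type*) [NormedField K] [Algebra ℚ_[l] K]
    (E : IntermediateField ℚ_[l] K) : Subgroup ↥(unitBall l K E) :=
  (mu K).subgroupOf (unitBall l K E)

/-- The natural injection `O_E^×/μ_E → Kˣ/μ`. -/
noncomputable def inclQ (l : ℕ) [Fact l.Prime] (K : Type*) [NormedField K]
    [Algebra ℚ_[l] K] (E : IntermediateField ℚ_[l] K) :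
    (↥(unitBall l K E) ⧸ muSub l K E) →* Kˣ ⧸ mu K :=
  QuotientGroup.map (muSub l K E) (mu K) (unitBall l K E).subtype le_rfl

/-- A homomorphism `χ : G → Kˣ/μ` belongs to `Θ_G` if, for some finite subextension
`E` of `Q̄_ℓ/ℚ_ℓ`, it is the composition of a continuous homomorphism
`G → O_E^×/μ_E` with the natural map `O_E^×/μ_E → Kˣ/μ`. -/
def IsTheta (l : ℕ) [Fact l.Prime] (K : Type*) [NormedField K] [Algebra ℚ_[l] K]
    (G : Type*) [Group G] [TopologicalSpace G] (χ : G →* Kˣ ⧸ mu K) : Prop :=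
  ∃ E : IntermediateField ℚ_[l] K, FiniteDimensional ℚ_[l] E ∧
    ∃ φ : G →* (↥(unitBall l K E) ⧸ muSub l K E), Continuous φ ∧ (inclQ l K E).comp φ = χ

/-! Torsion-freeness holds because `μ` is the torsion subgroup of `Kˣ`.

For divisibility, let `χ` factor through a continuous `φ : G → O_E^×/μ_E`. The unit sphere of
`E` is compact; cover it by finitely many balls `x · (1 + B)` with `B` so small that Newton's
method extracts `n`-th roots of `1 + B` inside `E`. Adjoining `n`-th roots of the finitely many
centres `x` gives one finite extension `E'` in which every element of `O_E^×` is an `n`-th power.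
Since distinct roots of unity are `l⁻¹`-apart, `μ_{E'}` is closed, so `O_{E'}^×/μ_{E'}` is a
compact Hausdorff torsion-free group; there the `n`-th power map is a closed embedding, and the
`n`-th root of the image of `φ` is again continuous. -/

section Ultrametric

variable {F : Type*} [NormedField F] [IsUltrametricDist F]

theorem norm_mul_sub_one_le_of_le {a b : F} {ρ : ℝ} (hρ : ρ ≤ 1) (ha : ‖a - 1‖ ≤ ρ)
    (hb : ‖b - 1‖ ≤ ρ) : ‖a * b - 1‖ ≤ ρ := by
  have ha1 : ‖a‖ ≤ 1 := by
    simpa using (IsUltrametricDist.norm_add_le_max (a - 1) 1).trans (by simpa using ha.trans hρ)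
  calc ‖a * b - 1‖ = ‖a * (b - 1) + (a - 1)‖ := by ring_nf
    _ ≤ max ‖a * (b - 1)‖ ‖a - 1‖ := IsUltrametricDist.norm_add_le_max _ _
    _ ≤ ρ := max_le ((norm_mul_le _ _).trans (by nlinarith [norm_nonneg (b - 1)])) ha

theorem norm_pow_sub_one_le_of_le {a : F} {ρ : ℝ} (hρ₀ : 0 ≤ ρ) (hρ : ρ ≤ 1)
    (ha : ‖a - 1‖ ≤ ρ) (k : ℕ) : ‖a ^ k - 1‖ ≤ ρ := by
  induction k with
  | zero => simpa using hρ₀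
  | succ k ih => rw [pow_succ]; exact norm_mul_sub_one_le_of_le hρ ih ha

theorem norm_sub_one_le_one_of_norm_le_one {a : F} (ha : ‖a‖ ≤ 1) : ‖a - 1‖ ≤ 1 := by
  simpa [sub_eq_add_neg] using
    (IsUltrametricDist.norm_add_le_max a (-1)).trans (max_le ha (by simp))

theorem IsOfFinOrder.exists_prime_norm_natCast_le_norm_sub_one {z : F} (hz : IsOfFinOrder z)
    (hz1 : z ≠ 1) : ∃ p : ℕ, p.Prime ∧ ‖(p : F)‖ ≤ ‖z - 1‖ := by
  set d := orderOf z
  have hp : d.minFac.Prime := Nat.minFac_prime (by simpa [d] using hz1)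
  set τ := z ^ (d / d.minFac)
  have hτ : IsPrimitiveRoot τ d.minFac := (IsPrimitiveRoot.orderOf z).pow hz.orderOf_pos
    (Nat.div_mul_cancel (Nat.minFac_dvd d)).symm
  have hρ : ‖z - 1‖ ≤ 1 := norm_sub_one_le_one_of_norm_le_one hz.norm_eq_one.le
  have hfactor (k : ℕ) : ‖1 - τ ^ (k + 1)‖ ≤ ‖z - 1‖ := by
    rw [norm_sub_rev, ← pow_mul]
    exact norm_pow_sub_one_le_of_le (norm_nonneg _) hρ le_rfl _
  obtain ⟨q, hq⟩ : ∃ q, d.minFac = q + 1 := ⟨d.minFac - 1, by have := hp.two_le; omega⟩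
  have hq0 : q ≠ 0 := by have := hp.two_le; omega
  have hτq : IsPrimitiveRoot τ (q + 1) := hq ▸ hτ
  refine ⟨d.minFac, hp, ?_⟩
  calc ‖(d.minFac : F)‖ = ∏ k ∈ Finset.range q, ‖1 - τ ^ (k + 1)‖ := by
        rw [← norm_prod, hτq.prod_one_sub_pow_eq_order, hq, Nat.cast_succ]
    _ ≤ ∏ _k ∈ Finset.range q, ‖z - 1‖ :=
        Finset.prod_le_prod (fun _ _ => norm_nonneg _) fun k _ => hfactor k
    _ = ‖z - 1‖ ^ q := by rw [Finset.prod_const, Finset.card_range]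
    _ ≤ ‖z - 1‖ := pow_le_of_le_one (norm_nonneg _) hρ hq0

theorem norm_pow_sub_pow_sub_le {n : ℕ} {ρ : ℝ} (hρ : ρ ≤ 1) {y y' : F} (hy : ‖y‖ ≤ ρ)
    (hy' : ‖y'‖ ≤ ρ) : ‖(1 + y) ^ n - (1 + y') ^ n - n * (y - y')‖ ≤ ρ * ‖y - y'‖ := by
  have hρ₀ : 0 ≤ ρ := (norm_nonneg y).trans hy
  have h1 : ‖(1 + y) - 1‖ ≤ ρ := by simpa using hy
  have h1' : ‖(1 + y') - 1‖ ≤ ρ := by simpa using hy'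
  have hsum : (1 + y) ^ n - (1 + y') ^ n - n * (y - y') =
      (∑ i ∈ Finset.range n, ((1 + y) ^ i * (1 + y') ^ (n - 1 - i) - 1)) * (y - y') := by
    have hgeom := geom_sum₂_mul (1 + y) (1 + y') n
    simp only [Finset.sum_sub_distrib, Finset.sum_const, Finset.card_range, nsmul_eq_mul,
      mul_one] at hgeom ⊢
    linear_combination -hgeom
  rw [hsum, norm_mul]
  refine mul_le_mul_of_nonneg_right ?_ (norm_nonneg _)
  refine IsUltrametricDist.norm_sum_le_of_forall_le_of_nonneg hρ₀ fun i _ => ?_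
  exact norm_mul_sub_one_le_of_le hρ (norm_pow_sub_one_le_of_le hρ₀ hρ h1 _)
    (norm_pow_sub_one_le_of_le hρ₀ hρ h1' _)

/-- Newton's iteration `y ↦ y + n⁻¹ (1 + ε - (1 + y) ^ n)` contracts the ball of radius `‖n‖ / 2`
by a factor `2`. -/
theorem exists_pow_eq_one_add [CompleteSpace F] {n : ℕ} (hn : (n : F) ≠ 0) {ε : F}
    (hε : ‖ε‖ < ‖(n : F)‖ ^ 2 / 2) : ∃ x : F, x ^ n = 1 + ε := by
  set ν := ‖(n : F)‖
  have hν : 0 < ν := norm_pos_iff.2 hn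
  have hν1 : ν ≤ 1 := IsUltrametricDist.norm_natCast_le_one F n
  set B := Metric.closedBall (0 : F) (ν / 2)
  set f : F → F := fun y => y + (n : F)⁻¹ * (1 + ε - (1 + y) ^ n)
  have hlip : ∀ y ∈ B, ∀ y' ∈ B, ‖f y - f y'‖ ≤ 2⁻¹ * ‖y - y'‖ := by
    intro y hy y' hy'
    rw [mem_closedBall_zero_iff] at hy hy'
    have hdiff : f y - f y' = -(n : F)⁻¹ * ((1 + y) ^ n - (1 + y') ^ n - n * (y - y')) := by
      simp only [f]; field_simp; ring
    rw [hdiff, norm_mul, norm_neg, norm_inv]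
    calc ν⁻¹ * ‖(1 + y) ^ n - (1 + y') ^ n - n * (y - y')‖
        ≤ ν⁻¹ * (ν / 2 * ‖y - y'‖) := by
          gcongr; exact norm_pow_sub_pow_sub_le (by linarith) hy hy'
      _ = 2⁻¹ * ‖y - y'‖ := by field_simp
  have hf0 : ‖f 0‖ < ν / 2 := by
    calc ‖f 0‖ = ν⁻¹ * ‖ε‖ := by simp [f, ν]
      _ < ν⁻¹ * (ν ^ 2 / 2) := by gcongr
      _ = ν / 2 := by field_simp
  have hmaps : Set.MapsTo f B B := by
    intro y hy
    have hfy := hlip y hy 0 (Metric.mem_closedBall_self (by positivity))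
    rw [mem_closedBall_zero_iff] at hy ⊢
    calc ‖f y‖ = ‖(f y - f 0) + f 0‖ := by rw [sub_add_cancel]
      _ ≤ max ‖f y - f 0‖ ‖f 0‖ := IsUltrametricDist.norm_add_le_max _ _
      _ ≤ ν / 2 := max_le (by rw [sub_zero] at hfy; linarith [norm_nonneg y]) hf0.le
  have hcontr : ContractingWith 2⁻¹ (hmaps.restrict f B B) := by
    refine ⟨by norm_num, LipschitzWith.of_dist_le_mul fun y y' => ?_⟩
    simpa [Subtype.dist_eq, dist_eq_norm] using hlip y y.2 y' y'.2
  obtain ⟨y, -, hy, -⟩ := hcontr.exists_fixedPoint' Metric.isClosed_closedBall.isComplete hmaps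
    (Metric.mem_closedBall_self (by positivity)) (edist_ne_top _ _)
  refine ⟨1 + y, ?_⟩
  have hfix : (n : F)⁻¹ * (1 + ε - (1 + y) ^ n) = 0 := add_eq_left.1 hy
  rw [mul_eq_zero, inv_eq_zero, sub_eq_zero] at hfix
  exact (hfix.resolve_left hn).symm

end Ultrametric

/-- The `n`-th power map of a compact Hausdorff torsion-free group is a closed embedding. -/
theorem MonoidHom.exists_continuous_pow_eq {G Q : Type*} [MulOneClass G] [TopologicalSpace G]
    [CommGroup Q] [TopologicalSpace Q] [ContinuousMul Q] [CompactSpace Q] [T2Space Q]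
    [IsMulTorsionFree Q] {n : ℕ} (hn : n ≠ 0) (f : G →* Q) (hf : Continuous f)
    (hpow : ∀ g, ∃ q, q ^ n = f g) : ∃ ψ : G →* Q, Continuous ψ ∧ ∀ g, ψ g ^ n = f g := by
  have hP : Topology.IsClosedEmbedding (powMonoidHom n : Q →* Q) :=
    (continuous_pow n).isClosedEmbedding (pow_left_injective hn)
  let e := MonoidHom.ofInjective hP.injective
  let ψ : G →* Q := e.symm.toMonoidHom.comp (f.codRestrict _ hpow)
  have hψ (g : G) : ψ g ^ n = f g := congr_arg Subtype.val (e.apply_symm_apply _)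
  refine ⟨ψ, hP.continuous_iff.2 ?_, hψ⟩
  simpa [Function.comp_def, hψ] using hf

theorem mu_eq_torsion (K : Type*) [Field K] : mu K = CommGroup.torsion Kˣ := by
  ext x
  exact isOfFinOrder_iff_pow_eq_one.symm

theorem mem_mu_iff_isOfFinOrder_val {K : Type*} [Field K] {u : Kˣ} :
    u ∈ mu K ↔ IsOfFinOrder (u : K) := by
  rw [mu_eq_torsion, CommGroup.mem_torsion, Units.isOfFinOrder_val]

instance (K : Type*) [Field K] : IsMulTorsionFree (Kˣ ⧸ mu K) := by
  rw [mu_eq_torsion]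
  infer_instance

section Units

variable {l : ℕ} [Fact l.Prime] {K : Type*} [NormedField K] [Algebra ℚ_[l] K]

theorem muSub_eq_torsion (E : IntermediateField ℚ_[l] K) :
    muSub l K E = CommGroup.torsion (unitBall l K E) := by
  ext x
  rw [muSub, Subgroup.mem_subgroupOf, mu_eq_torsion, CommGroup.mem_torsion,
    CommGroup.mem_torsion]
  exact (unitBall l K E).subtype_injective.isOfFinOrder_iff

instance (E : IntermediateField ℚ_[l] K) :
    IsMulTorsionFree (unitBall l K E ⧸ muSub l K E) := by
  rw [muSub_eq_torsion]
  infer_instance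

end Units

section Padic

variable {l : ℕ} [Fact l.Prime] {K : Type*} [NormedField K] [Algebra ℚ_[l] K]

theorem Padic.inv_le_norm_natCast_of_prime {p : ℕ} (hp : p.Prime) :
    (l : ℝ)⁻¹ ≤ ‖(p : ℚ_[l])‖ := by
  by_cases hpl : p = l
  · rw [hpl, Padic.norm_p]
  · have hcop : l.Coprime p := (Nat.coprime_primes Fact.out hp).2 (Ne.symm hpl)
    rw [Padic.norm_natCast_eq_one_iff.2 hcop]
    exact inv_le_one_of_one_le₀ (by exact_mod_cast (Fact.out : l.Prime).one_le)

theorem norm_natCast_of_norm_algebraMap (hnorm : ∀ x : ℚ_[l], ‖algebraMap ℚ_[l] K x‖ = ‖x‖)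
    (m : ℕ) : ‖(m : K)‖ = ‖(m : ℚ_[l])‖ := by
  rw [← map_natCast (algebraMap ℚ_[l] K), hnorm]

theorem isUltrametricDist_of_norm_algebraMap
    (hnorm : ∀ x : ℚ_[l], ‖algebraMap ℚ_[l] K x‖ = ‖x‖) : IsUltrametricDist K :=
  IsUltrametricDist.isUltrametricDist_of_forall_norm_natCast_le_one fun m => by
    rw [norm_natCast_of_norm_algebraMap hnorm]
    exact IsUltrametricDist.norm_natCast_le_one ℚ_[l] m

theorem inv_le_norm_sub_one_of_mem_mu (hnorm : ∀ x : ℚ_[l], ‖algebraMap ℚ_[l] K x‖ = ‖x‖)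
    {u : Kˣ} (hu : u ∈ mu K) (hu1 : u ≠ 1) : (l : ℝ)⁻¹ ≤ ‖(u : K) - 1‖ := by
  have := isUltrametricDist_of_norm_algebraMap hnorm
  obtain ⟨p, hp, hpu⟩ :=
    (mem_mu_iff_isOfFinOrder_val.1 hu).exists_prime_norm_natCast_le_norm_sub_one
      (by simpa [Units.val_eq_one] using hu1)
  rw [norm_natCast_of_norm_algebraMap hnorm] at hpu
  exact (Padic.inv_le_norm_natCast_of_prime hp).trans hpu

theorem isClosed_mu (hnorm : ∀ x : ℚ_[l], ‖algebraMap ℚ_[l] K x‖ = ‖x‖) :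
    IsClosed (mu K : Set Kˣ) := by
  have hsep : (Units.val '' (mu K : Set Kˣ)).Pairwise fun x y => (l : ℝ)⁻¹ ≤ dist x y := by
    rintro _ ⟨u, hu, rfl⟩ _ ⟨v, hv, rfl⟩ huv
    have huv1 : u / v ≠ 1 := div_ne_one.2 (ne_of_apply_ne _ huv)
    calc (l : ℝ)⁻¹ ≤ ‖((u / v : Kˣ) : K) - 1‖ :=
          inv_le_norm_sub_one_of_mem_mu hnorm ((mu K).div_mem hu hv) huv1
      _ = dist (u : K) v := by
          rw [dist_eq_norm, Units.val_div_eq_div_val, div_sub_one v.ne_zero, norm_div,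
            (mem_mu_iff_isOfFinOrder_val.1 hv).norm_eq_one, div_one]
  have hclosed := Metric.isClosed_of_pairwise_le_dist (inv_pos.2 (by exact_mod_cast
    (Fact.out : l.Prime).pos)) hsep
  rw [← Set.preimage_image_eq (mu K : Set Kˣ) Units.val_injective]
  exact hclosed.preimage Units.continuous_val

end Padic

section FiniteExtension

variable {l : ℕ} [Fact l.Prime] {K : Type*} [NormedField K] [Algebra ℚ_[l] K]

theorem IntermediateField.properSpace_of_norm_algebraMap
    (hnorm : ∀ x : ℚ_[l], ‖algebraMap ℚ_[l] K x‖ = ‖x‖)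
    (E : IntermediateField ℚ_[l] K) [FiniteDimensional ℚ_[l] E] : ProperSpace E := by
  let _ : NormedSpace ℚ_[l] K := ⟨fun c x => by rw [Algebra.smul_def, norm_mul, hnorm]⟩
  have : FiniteDimensional ℚ_[l] (Subalgebra.toSubmodule E.toSubalgebra) :=
    ‹FiniteDimensional ℚ_[l] E›
  exact FiniteDimensional.proper ℚ_[l] (Subalgebra.toSubmodule E.toSubalgebra)

theorem compactSpace_unitBall (hnorm : ∀ x : ℚ_[l], ‖algebraMap ℚ_[l] K x‖ = ‖x‖)
    (E : IntermediateField ℚ_[l] K) [FiniteDimensional ℚ_[l] E] :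
    CompactSpace (unitBall l K E) := by
  have := E.properSpace_of_norm_algebraMap hnorm
  have hemb : Topology.IsEmbedding fun u : unitBall l K E => ((u : Kˣ) : K) :=
    Units.isEmbedding_val₀.comp Topology.IsEmbedding.subtypeVal
  have hrange : Set.range (fun u : unitBall l K E => ((u : Kˣ) : K)) =
      Subtype.val '' Metric.sphere (0 : E) 1 := by
    ext x
    constructor
    · rintro ⟨u, rfl⟩
      exact ⟨⟨(u : Kˣ), u.2.1⟩, by simpa using u.2.2, rfl⟩
    · rintro ⟨y, hy, rfl⟩
      have hy1 : ‖(y : K)‖ = 1 := by simpa using hy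
      exact ⟨⟨Units.mk0 y (by simpa using ne_zero_of_norm_ne_zero (hy1.trans_ne one_ne_zero)),
        y.2, hy1⟩, rfl⟩
  refine ⟨?_⟩
  rw [hemb.isCompact_iff, Set.image_univ, hrange]
  exact (isCompact_sphere 0 1).image continuous_subtype_val

theorem isClosed_muSub (hnorm : ∀ x : ℚ_[l], ‖algebraMap ℚ_[l] K x‖ = ‖x‖)
    (E : IntermediateField ℚ_[l] K) : IsClosed (muSub l K E : Set (unitBall l K E)) :=
  (isClosed_mu hnorm).preimage continuous_subtype_val

open IntermediateField in
theorem exists_le_forall_mem_unitBall_exists_pow_eq [IsAlgClosure ℚ_[l] K]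
    (hnorm : ∀ x : ℚ_[l], ‖algebraMap ℚ_[l] K x‖ = ‖x‖)
    (E : IntermediateField ℚ_[l] K) [FiniteDimensional ℚ_[l] E] {n : ℕ} (hn : n ≠ 0) :
    ∃ E' : IntermediateField ℚ_[l] K, FiniteDimensional ℚ_[l] E' ∧ E ≤ E' ∧
      ∀ u ∈ unitBall l K E, ∃ w ∈ unitBall l K E', w ^ n = u := by
  have := E.properSpace_of_norm_algebraMap hnorm
  have := isUltrametricDist_of_norm_algebraMap hnorm
  have := IsAlgClosure.isAlgClosed ℚ_[l] (K := K)
  have hnK : (n : K) ≠ 0 := by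
    rw [← norm_ne_zero_iff, norm_natCast_of_norm_algebraMap hnorm, norm_ne_zero_iff]
    exact_mod_cast hn
  have hnE : ‖(n : E)‖ = ‖(n : K)‖ := by simp
  have hnE' : (n : E) ≠ 0 := by rw [← norm_ne_zero_iff, hnE]; exact norm_ne_zero_iff.2 hnK
  set δ := ‖(n : K)‖ ^ 2 / 2
  have hδ : 0 < δ := by positivity
  obtain ⟨t, hts, htfin, hcov⟩ := finite_cover_balls_of_compact (isCompact_sphere (0 : E) 1) hδ
  choose r hr using fun x : K => IsAlgClosed.exists_pow_nat_eq x (Nat.pos_of_ne_zero hn)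
  set R := (fun x : E => r x) '' t
  have : Finite R := (htfin.image _).to_subtype
  have : FiniteDimensional ℚ_[l] (adjoin ℚ_[l] R) :=
    finiteDimensional_adjoin fun x _ => (Algebra.IsIntegral.isIntegral (R := ℚ_[l]) x)
  refine ⟨E ⊔ adjoin ℚ_[l] R, inferInstance, le_sup_left, fun u hu => ?_⟩
  set u' : E := ⟨u, hu.1⟩
  obtain ⟨x, hxt, hux⟩ : ∃ x ∈ t, u' ∈ Metric.ball x δ := by
    simpa using hcov (mem_sphere_zero_iff_norm.2 hu.2)
  have hx1 : ‖x‖ = 1 := mem_sphere_zero_iff_norm.1 (hts hxt)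
  have hx0 : x ≠ 0 := norm_ne_zero_iff.1 (by rw [hx1]; exact one_ne_zero)
  obtain ⟨y, hy⟩ : ∃ y : E, y ^ n = 1 + (u' / x - 1) := by
    refine exists_pow_eq_one_add hnE' ?_
    rw [hnE, div_sub_one hx0, norm_div, hx1, div_one, ← dist_eq_norm]
    exact hux
  set z := (y : K) * r x
  have hzn : z ^ n = u := by
    rw [add_sub_cancel, Subtype.ext_iff] at hy
    simp only [z, mul_pow, hr]
    push_cast at hy
    rw [hy, div_mul_cancel₀ _ (by exact_mod_cast hx0)]
  have hzE' : z ∈ E ⊔ adjoin ℚ_[l] R :=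
    mul_mem (le_sup_left (a := E) y.2) (le_sup_right (a := E) (subset_adjoin _ _ ⟨x, hxt, rfl⟩))
  have hz1 : ‖z‖ = 1 :=
    (pow_eq_one_iff_of_nonneg (norm_nonneg z) hn).1 (by rw [← norm_pow, hzn, hu.2])
  have hz0 : z ≠ 0 := norm_ne_zero_iff.1 (by rw [hz1]; exact one_ne_zero)
  exact ⟨Units.mk0 z hz0, ⟨hzE', hz1⟩, Units.ext hzn⟩

variable {E E' : IntermediateField ℚ_[l] K}

theorem unitBall_mono (h : E ≤ E') : unitBall l K E ≤ unitBall l K E' :=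
  fun _ hx => ⟨h hx.1, hx.2⟩

noncomputable def unitBallQuotMap (h : E ≤ E') :
    (unitBall l K E ⧸ muSub l K E) →* (unitBall l K E' ⧸ muSub l K E') :=
  QuotientGroup.map _ _ (Subgroup.inclusion (unitBall_mono h)) fun _ hx => hx

theorem continuous_unitBallQuotMap (h : E ≤ E') : Continuous (unitBallQuotMap h) :=
  (QuotientGroup.isQuotientMap_mk _).continuous_iff.2 <|
    continuous_quot_mk.comp (continuous_inclusion (unitBall_mono h))

theorem inclQ_comp_unitBallQuotMap (h : E ≤ E') :
    (inclQ l K E').comp (unitBallQuotMap h) = inclQ l K E := by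
  ext
  rfl

theorem exists_pow_eq_unitBallQuotMap (h : E ≤ E') {n : ℕ}
    (hroot : ∀ u ∈ unitBall l K E, ∃ w ∈ unitBall l K E', w ^ n = u)
    (q : unitBall l K E ⧸ muSub l K E) : ∃ r, r ^ n = unitBallQuotMap h q := by
  obtain ⟨u, rfl⟩ := QuotientGroup.mk_surjective q
  obtain ⟨w, hw, hwu⟩ := hroot u u.2
  exact ⟨QuotientGroup.mk ⟨w, hw⟩, by
    rw [← QuotientGroup.mk_pow]
    exact congr_arg QuotientGroup.mk (Subtype.ext hwu)⟩

end FiniteExtension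

theorem theta_uniquely_divisible_general
    {l : ℕ} [Fact l.Prime]
    (K : Type*) [NormedField K] [Algebra ℚ_[l] K] [IsAlgClosure ℚ_[l] K]
    (hnorm : ∀ x : ℚ_[l], ‖algebraMap ℚ_[l] K x‖ = ‖x‖)
    (G : Type*) [CommGroup G] [TopologicalSpace G] :
    (∀ χ : G →* Kˣ ⧸ mu K, IsTheta l K G χ →
      ∀ n : ℕ, 0 < n → (∀ g, χ g ^ n = 1) → χ = 1) ∧
    (∀ χ : G →* Kˣ ⧸ mu K, IsTheta l K G χ → ∀ n : ℕ, 0 < n →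
      ∃ ξ : G →* Kˣ ⧸ mu K, IsTheta l K G ξ ∧ ∀ g, ξ g ^ n = χ g) := by
  refine ⟨fun χ _ n hn hχ => ?_, fun χ hχ n hn => ?_⟩
  · ext g
    exact pow_left_injective hn.ne' (by simpa using hχ g)
  · obtain ⟨E, hE, φ, hφ, rfl⟩ := hχ
    obtain ⟨E', hE', hEE', hroot⟩ := exists_le_forall_mem_unitBall_exists_pow_eq hnorm E hn.ne'
    have := compactSpace_unitBall hnorm E'
    have := isClosed_muSub hnorm E'
    obtain ⟨ψ, hψ, hψn⟩ := MonoidHom.exists_continuous_pow_eq (Q := unitBall l K E' ⧸ muSub l K E')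
      hn.ne' ((unitBallQuotMap hEE').comp φ) ((continuous_unitBallQuotMap hEE').comp hφ)
      fun g => exists_pow_eq_unitBallQuotMap hEE' hroot (φ g)
    refine ⟨(inclQ l K E').comp ψ, ⟨E', hE', ψ, hψ, rfl⟩, fun g => ?_⟩
    rw [MonoidHom.comp_apply, ← map_pow, hψn, ← inclQ_comp_unitBallQuotMap hEE']
    rfl

/-- For every compact Hausdorff abelian topological group `G`, the
group `Θ_G` is uniquely divisible: it is torsion-free, and every element of
`Θ_G` admits an `n`-th root in `Θ_G` for every `n ≥ 1`. -/
theorem theta_uniquely_divisible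
    {l : ℕ} [Fact l.Prime]
    (K : Type*) [NormedField K] [Algebra ℚ_[l] K] [IsAlgClosure ℚ_[l] K]
    (hnorm : ∀ x : ℚ_[l], ‖algebraMap ℚ_[l] K x‖ = ‖x‖)
    (G : Type*) [CommGroup G] [TopologicalSpace G] [IsTopologicalGroup G]
    [CompactSpace G] [T2Space G] :
    (∀ χ : G →* Kˣ ⧸ mu K, IsTheta l K G χ →
      ∀ n : ℕ, 0 < n → (∀ g, χ g ^ n = 1) → χ = 1) ∧
    (∀ χ : G →* Kˣ ⧸ mu K, IsTheta l K G χ → ∀ n : ℕ, 0 < n →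
      ∃ ξ : G →* Kˣ ⧸ mu K, IsTheta l K G ξ ∧ ∀ g, ξ g ^ n = χ g) :=
  theta_uniquely_divisible_general K hnorm G
end

section
/- Let p be a prime number, let μ_p denote the group of p-th roots of unity in Q̄_ℓ^×, and endow Z̄_ℓ^×/μ_p with the quotient topology from the subspace topology on Z̄_ℓ^× ⊆ Q̄_ℓ^×. Then every compact subgroup of Z̄_ℓ^×/μ_p is contained in the image of O_E^× under the quotient map for some finite subextension E of Q̄_ℓ/ℚ_ℓ containing μ_p, i.e. is contained in O_E^×/μ_p. -/
/-! Setup: `K` plays the role of `Q̄_ℓ`: an algebraic closure of `ℚ_ℓ`, viewed as a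
normed field whose norm extends the `ℓ`-adic absolute value (this determines the
topology, such an extension being unique).  `ZbarUnits K` is the group `Z̄_ℓ^×`
of units of `Z̄_ℓ`, i.e. elements of absolute value one; `pRoots K p` is the
group `μ_p` of `p`-th roots of unity; `unitBall l K E` is `O_E^×`.  The quotient
`↥(ZbarUnits K) ⧸ (pRoots K p).subgroupOf (ZbarUnits K)` is `Z̄_ℓ^×/μ_p` with its
quotient topology. -/

/-- `Z̄_ℓ^×`, the subgroup of `Kˣ` of elements of absolute value `1`. -/
def ZbarUnits (K : Type*) [NormedField K] : Subgroup Kˣ where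
  carrier := {x | ‖(x : K)‖ = 1}
  one_mem' := by simp
  mul_mem' := by
    rintro a b ha hb
    simp only [Set.mem_setOf_eq] at *
    simp [ha, hb]
  inv_mem' := by
    rintro a ha
    simp only [Set.mem_setOf_eq] at *
    simp [ha]

/-- `μ_p`, the group of `p`-th roots of unity in `Kˣ`. -/
def pRoots (K : Type*) [Field K] (p : ℕ) : Subgroup Kˣ where
  carrier := {x | x ^ p = 1}
  one_mem' := one_pow p
  mul_mem' := by
    rintro a b ha hb
    simp only [Set.mem_setOf_eq] at *
    rw [mul_pow, ha, hb, mul_one]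
  inv_mem' := by
    rintro a ha
    simp only [Set.mem_setOf_eq] at *
    rw [inv_pow, ha, inv_one]

lemma unitBall_le_ZbarUnits (l : ℕ) [Fact l.Prime] (K : Type*) [NormedField K]
    [Algebra ℚ_[l] K] (E : IntermediateField ℚ_[l] K) :
    unitBall l K E ≤ ZbarUnits K := fun _ hx => hx.2

/-! The absolute value of `K` is its spectral norm, so `ℚ_[l]`-automorphisms of `K` are isometries,
and roots of unity `ζ ≠ 1` satisfy `‖ζ - 1‖ ≥ l⁻¹`. Hence no subextension separates an element
`z` with `‖z - 1‖ < l⁻¹` from its powers, which confines a multiplicatively closed set of such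
elements of bounded degree to a single finite extension. For a compact subgroup, Baire's theorem
applied to the closed sets of roots of monic degree-`n` polynomials over `ℤ_[l]` bounds the degree
near `1`. The quotient map by the finite group `μ_p` is proper, so compact subgroups of
`Z̄_ℓ^×/μ_p` come from compact subgroups of `Z̄_ℓ^×`. -/

open IntermediateField Polynomial Module

section SpectralNorm

variable {𝕜 : Type*} [NontriviallyNormedField 𝕜] [CompleteSpace 𝕜] [IsUltrametricDist 𝕜]
  {K : Type*} [NormedField K] [Algebra 𝕜 K] [Algebra.IsAlgebraic 𝕜 K]

theorem norm_eq_spectralNorm_of_norm_algebraMap (hnorm : ∀ c : 𝕜, ‖algebraMap 𝕜 K c‖ = ‖c‖)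
    (x : K) : ‖x‖ = spectralNorm 𝕜 K x :=
  letI : NormedAlgebra 𝕜 K :=
    { norm_smul_le c y := by rw [Algebra.smul_def, norm_mul, hnorm] }
  NormedAlgebra.norm_eq_spectralNorm 𝕜 x

theorem norm_algHom_apply (hnorm : ∀ c : 𝕜, ‖algebraMap 𝕜 K c‖ = ‖c‖)
    (σ : K →ₐ[𝕜] K) (x : K) : ‖σ x‖ = ‖x‖ := by
  simp only [norm_eq_spectralNorm_of_norm_algebraMap hnorm, spectralNorm,
    minpoly.algHom_eq σ σ.injective]

theorem norm_coeff_minpoly_le_one (hnorm : ∀ c : 𝕜, ‖algebraMap 𝕜 K c‖ = ‖c‖)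
    {x : K} (hx : ‖x‖ ≤ 1) (i : ℕ) : ‖(minpoly 𝕜 x).coeff i‖ ≤ 1 := by
  rw [norm_eq_spectralNorm_of_norm_algebraMap hnorm] at hx
  exact (spectralValue_le_one_iff
    (minpoly.monic (Algebra.IsIntegral.isIntegral x))).1 hx i

end SpectralNorm

theorem isUltrametricDist_of_norm_algebraMap_s9 {𝕜 : Type*} [NormedField 𝕜] [IsUltrametricDist 𝕜]
    {K : Type*} [NormedField K] [Algebra 𝕜 K] (hnorm : ∀ c : 𝕜, ‖algebraMap 𝕜 K c‖ = ‖c‖) :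
    IsUltrametricDist K :=
  .isUltrametricDist_of_forall_norm_natCast_le_one fun n => by
    rw [← map_natCast (algebraMap 𝕜 K), hnorm]
    exact IsUltrametricDist.norm_natCast_le_one 𝕜 n

section Ultrametric

variable {K : Type*} [NormedField K] [IsUltrametricDist K]

theorem norm_eq_one_of_norm_sub_one_lt_one {z : K} (hz : ‖z - 1‖ < 1) : ‖z‖ = 1 := by
  have h := IsUltrametricDist.norm_add_eq_max_of_norm_ne_norm (x := z - 1) (y := 1)
    (by rw [norm_one]; exact hz.ne)
  rwa [sub_add_cancel, norm_one, max_eq_right hz.le] at h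

theorem norm_mul_sub_one_lt {x y : K} {δ : ℝ} (hx : ‖x‖ ≤ 1) (hx1 : ‖x - 1‖ < δ)
    (hy1 : ‖y - 1‖ < δ) : ‖x * y - 1‖ < δ := by
  rw [show x * y - 1 = x * (y - 1) + (x - 1) by ring]
  refine (IsUltrametricDist.norm_add_le_max _ _).trans_lt (max_lt ?_ hx1)
  rw [norm_mul]
  exact (mul_le_of_le_one_left (norm_nonneg _) hx).trans_lt hy1

theorem norm_pow_sub_one_le {ζ : K} (hζ : ‖ζ‖ ≤ 1) (n : ℕ) : ‖ζ ^ n - 1‖ ≤ ‖ζ - 1‖ := by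
  rw [← geom_sum_mul, norm_mul]
  refine mul_le_of_le_one_left (norm_nonneg _) ?_
  exact IsUltrametricDist.norm_sum_le_of_forall_le_of_nonneg zero_le_one fun i _ => by
    simpa only [norm_pow] using pow_le_one₀ (norm_nonneg ζ) hζ

/-- Since `ζ ≠ 1` kills `∑ i < m, ζ ^ i`, we have `m = ∑ i < m, (1 - ζ ^ i)`. -/
theorem norm_natCast_le_norm_sub_one {ζ : K} (hζ : ‖ζ‖ ≤ 1) (hne : ζ ≠ 1) {m : ℕ}
    (hm : ζ ^ m = 1) : ‖(m : K)‖ ≤ ‖ζ - 1‖ := by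
  have hgeom : ∑ i ∈ Finset.range m, ζ ^ i = 0 := by
    have := geom_sum_mul ζ m
    rw [hm, sub_self, mul_eq_zero] at this
    exact this.resolve_right (sub_ne_zero.2 hne)
  have hm_eq : (m : K) = ∑ i ∈ Finset.range m, -(ζ ^ i - 1) := by
    simp [Finset.sum_sub_distrib, hgeom]
  rw [hm_eq]
  exact IsUltrametricDist.norm_sum_le_of_forall_le_of_nonneg (norm_nonneg _) fun i _ => by
    rw [norm_neg]; exact norm_pow_sub_one_le hζ i

end Ultrametric

theorem IntermediateField.finrank_adjoin_simple_le_mul {F K : Type*} [Field F] [Field K]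
    [Algebra F K] {x y : K} (hx : IsIntegral F x) (hxy : IsIntegral F (x * y)) (hx0 : x ≠ 0) :
    finrank F F⟮y⟯ ≤ finrank F F⟮x⟯ * finrank F F⟮x * y⟯ := by
  have := adjoin.finiteDimensional hx
  have := adjoin.finiteDimensional hxy
  have hy : y ∈ F⟮x⟯ ⊔ F⟮x * y⟯ := by
    have := mul_mem (inv_mem (le_sup_left (b := F⟮x * y⟯) (mem_adjoin_simple_self F x)))
      (le_sup_right (a := F⟮x⟯) (mem_adjoin_simple_self F (x * y)))
    rwa [inv_mul_cancel_left₀ hx0] at this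
  exact (finrank_le_of_le_right (adjoin_simple_le_iff.2 hy)).trans (finrank_sup_le _ _)

theorem IntermediateField.finite_setOf_le {F K : Type*} [Field F] [Field K] [Algebra F K]
    (L : IntermediateField F K) [FiniteDimensional F L] [Algebra.IsSeparable F L] :
    {E : IntermediateField F K | E ≤ L}.Finite := by
  have : Finite (IntermediateField F L) :=
    (Field.exists_primitive_element_iff_finite_intermediateField F L).1
      ⟨inferInstance, Field.exists_primitive_element F L⟩
  exact (Set.finite_range lift).subset fun E hE => ⟨restrict hE, lift_restrict hE⟩

theorem IsCompact.exists_isOpen_inter_subset_of_subset_iUnion {X : Type*} [TopologicalSpace X]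
    [T2Space X] {A : Set X} (hA : IsCompact A) (hne : A.Nonempty) {C : ℕ → Set X}
    (hC : ∀ n, IsClosed (C n)) (hcov : A ⊆ ⋃ n, C n) :
    ∃ n U, IsOpen U ∧ (A ∩ U).Nonempty ∧ A ∩ U ⊆ C n := by
  have : CompactSpace A := isCompact_iff_compactSpace.1 hA
  have : Nonempty A := hne.to_subtype
  obtain ⟨n, x, hx⟩ := nonempty_interior_of_iUnion_of_closed
    (f := fun n => ((↑) : A → X) ⁻¹' C n) (fun n => (hC n).preimage continuous_subtype_val)
    (Set.eq_univ_of_forall fun x => by simpa using hcov x.2)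
  obtain ⟨U, hU, hUeq⟩ := isOpen_induced_iff.1 (isOpen_interior (s := ((↑) : A → X) ⁻¹' C n))
  refine ⟨n, U, hU, ⟨x, x.2, ?_⟩, fun y ⟨hyA, hyU⟩ => ?_⟩
  · exact (hUeq.symm ▸ hx : x ∈ ((↑) : A → X) ⁻¹' U)
  · have : (⟨y, hyA⟩ : A) ∈ interior (((↑) : A → X) ⁻¹' C n) := hUeq ▸ hyU
    exact (interior_subset this : (⟨y, hyA⟩ : A) ∈ ((↑) : A → X) ⁻¹' C n)

theorem QuotientGroup.isProperMap_mk {G : Type*} [Group G] [TopologicalSpace G]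
    [IsTopologicalGroup G] {N : Subgroup G} [N.Normal] (hN : IsCompact (N : Set G)) :
    IsProperMap ((↑) : G → G ⧸ N) := by
  refine isProperMap_iff_isClosedMap_and_compact_fibers.2
    ⟨continuous_mk, isClosedMap_coe hN, fun y => ?_⟩
  obtain ⟨g, rfl⟩ := mk_surjective y
  rw [← Set.image_singleton, preimage_image_mk_eq_mul]
  exact isCompact_singleton.mul hN

section Padic

variable {l : ℕ} [Fact l.Prime]

theorem inv_le_norm_natCast_of_prime {q : ℕ} (hq : q.Prime) : (l : ℝ)⁻¹ ≤ ‖(q : ℚ_[l])‖ := by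
  obtain rfl | hql := eq_or_ne q l
  · rw [Padic.norm_p]
  · rw [(Padic.norm_natCast_eq_one_iff).2 ((Nat.coprime_primes Fact.out hq).2 hql.symm)]
    exact inv_le_one_of_one_le₀ (by exact_mod_cast (Fact.out : l.Prime).one_le)

variable {K : Type*} [NormedField K] [Algebra ℚ_[l] K]

/-- For `q` a prime factor of the order `n` of `ζ`, the root of unity `ζ ^ (n / q)` has order `q`,
so `‖ζ - 1‖ ≥ ‖ζ ^ (n / q) - 1‖ ≥ ‖q‖ ≥ l⁻¹`. -/
theorem inv_le_norm_sub_one_of_isOfFinOrder (hnorm : ∀ c : ℚ_[l], ‖algebraMap ℚ_[l] K c‖ = ‖c‖)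
    {ζ : K} (hfin : IsOfFinOrder ζ) (hne : ζ ≠ 1) : (l : ℝ)⁻¹ ≤ ‖ζ - 1‖ := by
  have := isUltrametricDist_of_norm_algebraMap_s9 hnorm
  have hζ : ‖ζ‖ ≤ 1 := hfin.norm_eq_one.le
  set n := orderOf ζ
  obtain ⟨q, hq, hqn⟩ := Nat.exists_prime_and_dvd (orderOf_eq_one_iff.not.2 hne)
  have hθ : (ζ ^ (n / q)) ^ q = 1 := by
    rw [← pow_mul, Nat.div_mul_cancel hqn, pow_orderOf_eq_one]
  have hθne : ζ ^ (n / q) ≠ 1 :=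
    pow_ne_one_of_lt_orderOf ((Nat.div_ne_zero_iff_of_dvd hqn).2 ⟨hfin.orderOf_pos.ne', hq.ne_zero⟩)
      (Nat.div_lt_self hfin.orderOf_pos hq.one_lt)
  calc (l : ℝ)⁻¹ ≤ ‖(q : ℚ_[l])‖ := inv_le_norm_natCast_of_prime hq
    _ = ‖(q : K)‖ := by rw [← hnorm, map_natCast]
    _ ≤ ‖ζ ^ (n / q) - 1‖ :=
      norm_natCast_le_norm_sub_one (by simpa using pow_le_one₀ (norm_nonneg ζ) hζ) hθne hθ
    _ ≤ ‖ζ - 1‖ := norm_pow_sub_one_le hζ _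

/-- A conjugate `σ z ≠ z` over `F` would make `σ z / z` a root of unity `≠ 1` closer to `1`
than `l⁻¹`. -/
theorem mem_of_pow_mem_of_norm_sub_one_lt [IsAlgClosure ℚ_[l] K]
    (hnorm : ∀ c : ℚ_[l], ‖algebraMap ℚ_[l] K c‖ = ‖c‖) (F : IntermediateField ℚ_[l] K)
    {z : K} (hz : ‖z - 1‖ < (l : ℝ)⁻¹) {m : ℕ} (hm0 : m ≠ 0) (hzm : z ^ m ∈ F) : z ∈ F := by
  have := isUltrametricDist_of_norm_algebraMap_s9 hnorm
  by_contra hzF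
  rw [← InfiniteGalois.fixedField_fixingSubgroup F] at hzF
  obtain ⟨σ, hσF, hσz⟩ : ∃ σ ∈ F.fixingSubgroup, σ z ≠ z := by
    simpa [IntermediateField.mem_fixedField_iff] using hzF
  have hz1 : ‖z‖ = 1 := norm_eq_one_of_norm_sub_one_lt_one
    (hz.trans (inv_lt_one_of_one_lt₀ (by exact_mod_cast (Fact.out : l.Prime).one_lt)))
  have hz0 : z ≠ 0 := norm_ne_zero_iff.1 (by simp [hz1])
  set ζ := σ z * z⁻¹
  have hζm : ζ ^ m = 1 := by
    have hfix : σ (z ^ m) = z ^ m := (_root_.mem_fixingSubgroup_iff _).1 hσF _ hzm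
    rw [mul_pow, ← map_pow, hfix, inv_pow, mul_inv_cancel₀ (pow_ne_zero m hz0)]
  have hζ1 : ζ ≠ 1 := fun h => hσz (by simpa [ζ, mul_inv_eq_one₀ hz0] using h)
  have hclose : ‖ζ - 1‖ ≤ ‖z - 1‖ := calc
    ‖ζ - 1‖ = ‖σ (z - 1) - (z - 1)‖ := by
      rw [show ζ - 1 = (σ (z - 1) - (z - 1)) * z⁻¹ by simp [ζ, sub_mul, hz0],
        norm_mul, norm_inv, hz1, inv_one, mul_one]
    _ ≤ max ‖σ (z - 1)‖ ‖z - 1‖ := by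
      simpa only [sub_eq_add_neg, norm_neg] using
        IsUltrametricDist.norm_add_le_max (σ (z - 1)) (-(z - 1))
    _ = ‖z - 1‖ := by
      rw [show ‖σ (z - 1)‖ = ‖z - 1‖ from norm_algHom_apply hnorm σ.toAlgHom _, max_self]
  exact (inv_le_norm_sub_one_of_isOfFinOrder hnorm
    (isOfFinOrder_iff_pow_eq_one.2 ⟨m, Nat.pos_of_ne_zero hm0, hζm⟩) hζ1).not_gt
    (hclose.trans_lt hz)

end Padic

section Compact

variable {l : ℕ} [Fact l.Prime] {K : Type*} [NormedField K] [Algebra ℚ_[l] K]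

variable (l K) in
def monicIntegralRoots (n : ℕ) : Set K :=
  {x | ∃ f : Fin n → ℤ_[l], x ^ n + ∑ i, algebraMap ℚ_[l] K (f i) * x ^ (i : ℕ) = 0}

/-- The coefficient space `Fin n → ℤ_[l]` is compact, so projecting away from it is closed. -/
theorem isClosed_monicIntegralRoots (hnorm : ∀ c : ℚ_[l], ‖algebraMap ℚ_[l] K c‖ = ‖c‖)
    (n : ℕ) : IsClosed (monicIntegralRoots l K n) := by
  have hcont : Continuous (algebraMap ℚ_[l] K) :=
    (AddMonoidHomClass.isometry_of_norm (algebraMap ℚ_[l] K) hnorm).continuous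
  have hclosed : IsClosed {q : (Fin n → ℤ_[l]) × K |
      q.2 ^ n + ∑ i, algebraMap ℚ_[l] K (q.1 i) * q.2 ^ (i : ℕ) = 0} :=
    isClosed_eq (by fun_prop) continuous_const
  convert isClosedMap_snd_of_compactSpace _ hclosed
  ext x
  simp [monicIntegralRoots]

theorem finrank_adjoin_simple_le_of_mem_monicIntegralRoots {n : ℕ} {x : K}
    (hx : x ∈ monicIntegralRoots l K n) : finrank ℚ_[l] ℚ_[l]⟮x⟯ ≤ n := by
  obtain ⟨f, hf⟩ := hx
  have hlow := degree_sum_fin_lt fun i => (f i : ℚ_[l])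
  set q : ℚ_[l][X] := X ^ n + ∑ i : Fin n, C (f i : ℚ_[l]) * X ^ (i : ℕ)
  have hq : q.Monic := monic_X_pow_add hlow
  have hqn : q.natDegree = n := by
    rw [natDegree_add_eq_left_of_degree_lt (by rwa [degree_X_pow]), natDegree_X_pow]
  have hqx : aeval x q = 0 := by simpa [q, Algebra.smul_def] using hf
  rw [adjoin.finrank ⟨q, hq, hqx⟩, ← hqn]
  exact natDegree_le_natDegree (minpoly.min ℚ_[l] x hq hqx)

theorem mem_monicIntegralRoots_natDegree_minpoly [Algebra.IsAlgebraic ℚ_[l] K]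
    (hnorm : ∀ c : ℚ_[l], ‖algebraMap ℚ_[l] K c‖ = ‖c‖) {x : K} (hx : ‖x‖ ≤ 1) :
    x ∈ monicIntegralRoots l K (minpoly ℚ_[l] x).natDegree := by
  have hmonic := minpoly.monic (Algebra.IsIntegral.isIntegral (R := ℚ_[l]) x)
  refine ⟨fun i => ⟨(minpoly ℚ_[l] x).coeff i, norm_coeff_minpoly_le_one hnorm hx i⟩, ?_⟩
  have h := minpoly.aeval ℚ_[l] x
  rw [hmonic.as_sum] at h
  simpa [← Fin.sum_univ_eq_sum_range, Algebra.smul_def] using h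

variable [IsAlgClosure ℚ_[l] K]

/-- For `w` of maximal degree and `z ∈ V`, two of the finitely many fields `ℚ_[l]⟮w * z ^ a⟯`
below `ℚ_[l]⟮w, z⟯` coincide, say for `a < b`; that field contains `z ^ (b - a)`, hence `z`
(root extraction), hence `w`, so it is `ℚ_[l]⟮w⟯` by maximality. -/
theorem exists_forall_mem_adjoin_simple (hnorm : ∀ c : ℚ_[l], ‖algebraMap ℚ_[l] K c‖ = ‖c‖)
    (V : Submonoid Kˣ) (hV : ∀ z ∈ V, ‖(z : K) - 1‖ < (l : ℝ)⁻¹) {n : ℕ}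
    (hdeg : ∀ z ∈ V, finrank ℚ_[l] ℚ_[l]⟮(z : K)⟯ ≤ n) :
    ∃ w ∈ V, ∀ z ∈ V, (z : K) ∈ ℚ_[l]⟮(w : K)⟯ := by
  set d : Kˣ → ℕ := fun z => finrank ℚ_[l] ℚ_[l]⟮(z : K)⟯
  have hbdd : BddAbove (d '' V) := ⟨n, by rintro _ ⟨z, hz, rfl⟩; exact hdeg z hz⟩
  obtain ⟨w, hwV, hw⟩ := Nat.sSup_mem (Set.Nonempty.image d ⟨1, V.one_mem⟩) hbdd
  have hwmax : ∀ z ∈ V, d z ≤ d w := fun z hz => hw ▸ le_csSup hbdd ⟨z, hz, rfl⟩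
  refine ⟨w, hwV, fun z hz => ?_⟩
  set L := ℚ_[l]⟮(w : K), (z : K)⟯
  have : FiniteDimensional ℚ_[l] L :=
    finiteDimensional_adjoin fun x _ => Algebra.IsIntegral.isIntegral x
  have hwz (a : ℕ) : ℚ_[l]⟮((w * z ^ a : Kˣ) : K)⟯ ≤ L := by
    rw [adjoin_simple_le_iff, Units.val_mul, Units.val_pow_eq_pow_val]
    exact mul_mem (subset_adjoin _ _ (by simp)) (pow_mem (subset_adjoin _ _ (by simp)) a)
  obtain ⟨a, b, hab, hF⟩ := (finite_setOf_le L).exists_lt_map_eq_of_forall_mem hwz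
  set F := ℚ_[l]⟮((w * z ^ a : Kˣ) : K)⟯
  have ha : ((w * z ^ a : Kˣ) : K) ∈ F := mem_adjoin_simple_self _ _
  have hb : ((w * z ^ b : Kˣ) : K) ∈ F := hF ▸ mem_adjoin_simple_self _ _
  have hzb : (z : K) ^ (b - a) ∈ F := by
    have := mul_mem (inv_mem ha) hb
    rwa [← Units.val_inv_eq_inv_val, ← Units.val_mul,
      show (w * z ^ a)⁻¹ * (w * z ^ b) = z ^ (b - a) by
        rw [pow_sub z hab.le]; group, Units.val_pow_eq_pow_val] at this
  have hzF : (z : K) ∈ F := mem_of_pow_mem_of_norm_sub_one_lt hnorm F (hV z hz) (by omega) hzb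
  have hwF : (w : K) ∈ F := by
    have := mul_mem ha (inv_mem (pow_mem hzF a))
    rwa [Units.val_mul, Units.val_pow_eq_pow_val,
      mul_inv_cancel_right₀ (pow_ne_zero _ z.ne_zero)] at this
  have : FiniteDimensional ℚ_[l] F := adjoin.finiteDimensional (Algebra.IsIntegral.isIntegral _)
  rwa [eq_of_le_of_finrank_le (adjoin_simple_le_iff.2 hwF)
    (hwmax _ (V.mul_mem hwV (V.pow_mem hz a)))]

/-- By Baire, the degree is bounded by some `n` on a ball around some `a₀ ∈ H`; near `1` it is
then bounded by `n * n`, since `z ∈ ℚ_[l]⟮a₀, a₀ * z⟯`. -/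
theorem exists_forall_finrank_adjoin_simple_le_of_isCompact
    (hnorm : ∀ c : ℚ_[l], ‖algebraMap ℚ_[l] K c‖ = ‖c‖) (H : Subgroup Kˣ)
    (hH : H ≤ ZbarUnits K) (hHc : IsCompact (H : Set Kˣ)) :
    ∃ ρ > 0, ∃ n : ℕ, ∀ z ∈ H, ‖(z : K) - 1‖ < ρ → finrank ℚ_[l] ℚ_[l]⟮(z : K)⟯ ≤ n := by
  have hnorm1 (u : Kˣ) (hu : u ∈ H) : ‖(u : K)‖ = 1 := hH hu
  obtain ⟨n, U, hU, ⟨_, ⟨a₀, ha₀H, rfl⟩, ha₀U⟩, hUn⟩ :=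
    (hHc.image Units.continuous_val).exists_isOpen_inter_subset_of_subset_iUnion
      ⟨1, 1, H.one_mem, rfl⟩ (isClosed_monicIntegralRoots hnorm) fun _ ⟨u, hu, hux⟩ =>
        Set.mem_iUnion.2 ⟨_, mem_monicIntegralRoots_natDegree_minpoly hnorm (hux ▸ hnorm1 u hu).le⟩
  obtain ⟨ρ, hρ, hball⟩ := Metric.isOpen_iff.1 hU _ ha₀U
  have hdeg (u : Kˣ) (hu : u ∈ H) (hdist : ‖(u : K) - a₀‖ < ρ) :
      finrank ℚ_[l] ℚ_[l]⟮(u : K)⟯ ≤ n :=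
    finrank_adjoin_simple_le_of_mem_monicIntegralRoots
      (hUn ⟨⟨u, hu, rfl⟩, hball (mem_ball_iff_norm.2 hdist)⟩)
  refine ⟨ρ, hρ, n * n, fun z hzH hz => ?_⟩
  refine (finrank_adjoin_simple_le_mul (Algebra.IsIntegral.isIntegral _)
    (Algebra.IsIntegral.isIntegral _) a₀.ne_zero).trans
    (Nat.mul_le_mul (hdeg a₀ ha₀H (by simpa using hρ)) ?_)
  simpa only [Units.val_mul] using hdeg (a₀ * z) (H.mul_mem ha₀H hzH)
    (by rwa [Units.val_mul, ← mul_sub_one, norm_mul, hnorm1 a₀ ha₀H, one_mul])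

/-- The elements of `H` close to `1` lie in a single `ℚ_[l]⟮w⟯`, and finitely many translates
of them cover `H`. -/
theorem exists_finiteDimensional_of_isCompact
    (hnorm : ∀ c : ℚ_[l], ‖algebraMap ℚ_[l] K c‖ = ‖c‖) (H : Subgroup Kˣ)
    (hH : H ≤ ZbarUnits K) (hHc : IsCompact (H : Set Kˣ)) :
    ∃ E : IntermediateField ℚ_[l] K, FiniteDimensional ℚ_[l] E ∧ ∀ x ∈ H, (x : K) ∈ E := by
  have := isUltrametricDist_of_norm_algebraMap_s9 hnorm
  have hnorm1 (u : Kˣ) (hu : u ∈ H) : ‖(u : K)‖ = 1 := hH hu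
  obtain ⟨ρ, hρ, n, hdeg⟩ := exists_forall_finrank_adjoin_simple_le_of_isCompact hnorm H hH hHc
  set δ := min ρ (l : ℝ)⁻¹
  have hδ : 0 < δ := lt_min hρ (inv_pos.2 (by exact_mod_cast (Fact.out : l.Prime).pos))
  let V : Submonoid Kˣ :=
    { carrier := {u | u ∈ H ∧ ‖(u : K) - 1‖ < δ}
      one_mem' := ⟨H.one_mem, by simpa using hδ⟩
      mul_mem' := fun ⟨hu, hu1⟩ ⟨hv, hv1⟩ =>
        ⟨H.mul_mem hu hv, norm_mul_sub_one_lt (hnorm1 _ hu).le hu1 hv1⟩ }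
  obtain ⟨w, -, hw⟩ := exists_forall_mem_adjoin_simple hnorm V
    (fun z hz => hz.2.trans_le (min_le_right _ _))
    (fun z hz => hdeg z hz.1 (hz.2.trans_le (min_le_left _ _)))
  obtain ⟨t, htA, htfin, hcover⟩ := (hHc.image Units.continuous_val).finite_cover_balls hδ
  have : Finite t := htfin.to_subtype
  refine ⟨ℚ_[l]⟮(w : K)⟯ ⊔ adjoin ℚ_[l] t, ?_, fun y hy => ?_⟩
  · have := adjoin.finiteDimensional (Algebra.IsIntegral.isIntegral (R := ℚ_[l]) (w : K))
    have := finiteDimensional_adjoin (K := ℚ_[l]) (S := t) fun x _ =>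
      Algebra.IsIntegral.isIntegral x
    exact finiteDimensional_sup _ _
  obtain ⟨_, hxt, hyx⟩ := Set.mem_iUnion₂.1 (hcover ⟨y, hy, rfl⟩)
  obtain ⟨x, hxH, rfl⟩ := htA hxt
  have hxy : x⁻¹ * y ∈ V := by
    refine ⟨H.mul_mem (H.inv_mem hxH) hy, ?_⟩
    rwa [Units.val_mul, Units.val_inv_eq_inv_val, ← inv_mul_cancel₀ x.ne_zero, ← mul_sub,
      norm_mul, norm_inv, hnorm1 x hxH, inv_one, one_mul, ← dist_eq_norm]
  have := mul_mem (le_sup_right (a := ℚ_[l]⟮(w : K)⟯) (subset_adjoin ℚ_[l] t hxt))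
    (le_sup_left (b := adjoin ℚ_[l] t) (hw _ hxy))
  rwa [Units.val_mul, Units.val_inv_eq_inv_val, mul_inv_cancel_left₀ x.ne_zero] at this

end Compact

/-- Let `p` be a prime number and `μ_p` the group of `p`-th roots
of unity in `Q̄_ℓ^×`; endow `Z̄_ℓ^×/μ_p` with the quotient topology.  Then every
compact subgroup of `Z̄_ℓ^×/μ_p` is contained in `O_E^×/μ_p` (the image of
`O_E^×` under the quotient map) for some finite subextension `E` of `Q̄_ℓ/ℚ_ℓ`
containing `μ_p`. -/
theorem compact_subgroup_of_ZbarUnits_mod_pRoots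
    {l : ℕ} [Fact l.Prime]
    (K : Type*) [NormedField K] [Algebra ℚ_[l] K] [IsAlgClosure ℚ_[l] K]
    (hnorm : ∀ x : ℚ_[l], ‖algebraMap ℚ_[l] K x‖ = ‖x‖)
    (p : ℕ) (hp : p.Prime)
    (S : Subgroup (↥(ZbarUnits K) ⧸ (pRoots K p).subgroupOf (ZbarUnits K)))
    (hS : IsCompact (S : Set (↥(ZbarUnits K) ⧸ (pRoots K p).subgroupOf (ZbarUnits K)))) :
    ∃ E : IntermediateField ℚ_[l] K, FiniteDimensional ℚ_[l] E ∧
      (∀ x : Kˣ, x ^ p = 1 → (x : K) ∈ E) ∧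
      S ≤ ((QuotientGroup.mk' ((pRoots K p).subgroupOf (ZbarUnits K))).comp
            (Subgroup.inclusion (unitBall_le_ZbarUnits l K E))).range := by
  have : NeZero p := ⟨hp.ne_zero⟩
  set N := (pRoots K p).subgroupOf (ZbarUnits K)
  have hμ : (pRoots K p : Set Kˣ).Finite :=
    Set.finite_coe_iff.1 (inferInstance : Finite (rootsOfUnity p K))
  have hN : IsCompact (N : Set (ZbarUnits K)) :=
    (hμ.preimage Subtype.val_injective.injOn).isCompact
  set H := (S.comap (QuotientGroup.mk' N)).map (ZbarUnits K).subtype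
  have hHc : IsCompact (H : Set Kˣ) :=
    ((QuotientGroup.isProperMap_mk hN).isCompact_preimage hS).image continuous_subtype_val
  obtain ⟨E₀, hE₀, hHE₀⟩ :=
    exists_finiteDimensional_of_isCompact hnorm H (Subgroup.map_subtype_le _) hHc
  set μp : Set K := Set.range fun ζ : rootsOfUnity p K => ((ζ : Kˣ) : K)
  have := finiteDimensional_adjoin (K := ℚ_[l]) (S := μp) fun x _ =>
    Algebra.IsIntegral.isIntegral x
  refine ⟨E₀ ⊔ adjoin ℚ_[l] μp, finiteDimensional_sup _ _,
    fun x hx => le_sup_right (a := E₀) (subset_adjoin _ _ ⟨⟨x, hx⟩, rfl⟩), ?_⟩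
  intro s hs
  obtain ⟨g, rfl⟩ := QuotientGroup.mk'_surjective N s
  exact ⟨⟨g, le_sup_left (b := adjoin ℚ_[l] μp) (hHE₀ _ ⟨g, hs, rfl⟩), g.2⟩, rfl⟩
end

section
/- Let k be a finite field, let (k_j)_{j ∈ J} be a finite family of finite field extensions of k, let F be a field, and for each j ∈ J let χ_j : k_j^× → F^× be a group homomorphism. Assume that for every c ∈ k^× one has ∏_{j ∈ J} χ_j(c) = 1, where c is viewed in k_j^× via the inclusion k ⊆ k_j. Then for any two nontrivial additive characters ψ, ψ' : k → F^×, one has ∏_{j ∈ J} τ_{k_j}(χ_j, ψ ∘ Tr_{k_j/k}) = ∏_{j ∈ J} τ_{k_j}(χ_j, ψ' ∘ Tr_{k_j/k}); that is, the Jacobi sum j_χ = ∏_{j ∈ J} τ_{k_j}(χ_j, ψ ∘ Tr_{k_j/k}) is independent of the choice of the nontrivial additive character ψ. -/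
/-!
Two nontrivial additive characters of a finite field differ by a multiplicative shift:
`ψ' = ψ.mulShift b` with `b ≠ 0`, since `b ↦ ψ.mulShift b` is injective and there are at most
`|k|` additive characters (they are linearly independent functions `k → F`). Substituting
`a ↦ b a` in each Gauss sum multiplies `τ_{K j}(χ j, ψ ∘ Tr)` by `χ j (b)`, and the product of
these factors is `1` by hypothesis.
-/

namespace AddChar

variable {A R : Type*} [AddMonoid A] [CommRing R] [IsDomain R]

theorem linearIndependent_coe : LinearIndependent R ((⇑) : AddChar A R → A → R) :=
  (linearIndependent_monoidHom (Multiplicative A) R).comp toMonoidHomEquiv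
    toMonoidHomEquiv.injective

instance [Finite A] : Finite (AddChar A R) := linearIndependent_coe.finite

theorem natCard_addChar_le [Finite A] : Nat.card (AddChar A R) ≤ Nat.card A := by
  have := Fintype.ofFinite A
  have := Fintype.ofFinite (AddChar A R)
  simpa [Nat.card_eq_fintype_card, Module.finrank_fintype_fun_eq_card] using
    (linearIndependent_coe (A := A) (R := R)).fintype_card_le_finrank

theorem mulShift_bijective_of_ne_one {k : Type*} [Field k] [Finite k] {ψ : AddChar k R}
    (hψ : ψ ≠ 1) : Function.Bijective ψ.mulShift :=
  (to_mulShift_inj_of_isPrimitive (IsPrimitive.of_ne_one hψ)).bijective_of_nat_card_le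
    natCard_addChar_le

theorem exists_ne_zero_mulShift_eq {k : Type*} [Field k] [Finite k] {ψ ψ' : AddChar k R}
    (hψ : ψ ≠ 1) (hψ' : ψ' ≠ 1) : ∃ b : k, b ≠ 0 ∧ ψ.mulShift b = ψ' := by
  obtain ⟨b, rfl⟩ := (mulShift_bijective_of_ne_one hψ).2 ψ'
  exact ⟨b, by rintro rfl; exact hψ' (mulShift_zero ψ), rfl⟩

theorem mulShift_compAddMonoidHom {k K M : Type*} [CommRing k] [Ring K] [Algebra k K]
    [CommMonoid M] (ψ : AddChar k M) (f : K →ₗ[k] k) (b : k) :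
    (ψ.mulShift b).compAddMonoidHom f.toAddMonoidHom =
      (ψ.compAddMonoidHom f.toAddMonoidHom).mulShift (algebraMap k K b) := by
  ext x
  simp [← Algebra.smul_def]

end AddChar

section UnitsGaussSum

variable {K F : Type*} [CommRing K] [Fintype Kˣ] [Field F]

/-- The Gauss sum `τ_K(χ, ψ)`; unlike `gaussSum`, `χ` is a character of `Kˣ`, not a `MulChar`. -/
def unitsGaussSum (χ : Kˣ →* Fˣ) (ψ : AddChar K F) : F :=
  -∑ a : Kˣ, ((χ a)⁻¹ : Fˣ) * ψ a

theorem unitsGaussSum_mulShift (χ : Kˣ →* Fˣ) (ψ : AddChar K F) (u : Kˣ) :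
    unitsGaussSum χ (ψ.mulShift u) = χ u * unitsGaussSum χ ψ := by
  simp only [unitsGaussSum, mul_neg, Finset.mul_sum]
  congr 1
  refine Fintype.sum_equiv (Equiv.mulLeft u) _ _ fun a => ?_
  have hχ : (χ a)⁻¹ = χ u * (χ (u * a))⁻¹ := by rw [map_mul, mul_inv, mul_inv_cancel_left]
  rw [Equiv.coe_mulLeft, hχ, Units.val_mul, mul_assoc, AddChar.mulShift_apply, Units.val_mul]

theorem unitsGaussSum_mulShift_compAddMonoidHom {k : Type*} [CommRing k] [Algebra k K]
    (χ : Kˣ →* Fˣ) (ψ : AddChar k F) (f : K →ₗ[k] k) (c : kˣ) :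
    unitsGaussSum χ ((ψ.mulShift c).compAddMonoidHom f.toAddMonoidHom) =
      χ (Units.map (algebraMap k K).toMonoidHom c) *
        unitsGaussSum χ (ψ.compAddMonoidHom f.toAddMonoidHom) := by
  rw [AddChar.mulShift_compAddMonoidHom, ← unitsGaussSum_mulShift]
  rfl

end UnitsGaussSum

theorem jacobi_sum_indep_of_add_char_general
    (k : Type*) [Field k] [Fintype k]
    {J : Type*} [Fintype J]
    (K : J → Type*) [∀ j, Field (K j)] [∀ j, Fintype (K j)] [∀ j, DecidableEq (K j)]
    [∀ j, Algebra k (K j)]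
    (F : Type*) [Field F]
    (χ : ∀ j, (K j)ˣ →* Fˣ)
    (hχ : ∀ c : kˣ, ∏ j, χ j (Units.map (algebraMap k (K j)).toMonoidHom c) = 1)
    (ψ ψ' : AddChar k F)
    (hψ : ∃ a : k, ψ a ≠ 1) (hψ' : ∃ a : k, ψ' a ≠ 1) :
    ∏ j, (-∑ a : (K j)ˣ, ((χ j a)⁻¹ : Fˣ) *
        ψ (Algebra.trace k (K j) (a : K j)))
      = ∏ j, (-∑ a : (K j)ˣ, ((χ j a)⁻¹ : Fˣ) *
        ψ' (Algebra.trace k (K j) (a : K j))) := by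
  obtain ⟨b, hb, rfl⟩ :=
    AddChar.exists_ne_zero_mulShift_eq (AddChar.ne_one_iff.2 hψ) (AddChar.ne_one_iff.2 hψ')
  let c : kˣ := Units.mk0 b hb
  change ∏ j, unitsGaussSum (χ j) (ψ.compAddMonoidHom (Algebra.trace k (K j)).toAddMonoidHom) =
    ∏ j, unitsGaussSum (χ j)
      ((ψ.mulShift c).compAddMonoidHom (Algebra.trace k (K j)).toAddMonoidHom)
  simp only [unitsGaussSum_mulShift_compAddMonoidHom, Finset.prod_mul_distrib, ← Units.coe_prod,
    hχ c, Units.val_one, one_mul]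

/-- Let `k` be a finite field, `(K j)_{j ∈ J}` a finite family of
finite field extensions of `k`, `F` a field, and `χ j : (K j)ˣ → Fˣ` group
homomorphisms such that `∏ j, χ j (c) = 1` for every `c ∈ kˣ` (viewing `c` in
`(K j)ˣ` via the inclusion `k ⊆ K j`).  Then for any two nontrivial additive
characters `ψ, ψ' : k → Fˣ`, the products of Gauss sums
`∏ j, τ_{K j}(χ j, ψ ∘ Tr_{K j/k})` and `∏ j, τ_{K j}(χ j, ψ' ∘ Tr_{K j/k})`
agree, where `τ_{k'}(χ, ψ') = -∑_{a ∈ k'ˣ} χ(a)⁻¹ ψ'(a)`; i.e. the Jacobi sum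
`j_χ` is independent of the choice of nontrivial additive character. -/
theorem jacobi_sum_indep_of_add_char
    (k : Type*) [Field k] [Fintype k]
    {J : Type*} [Fintype J]
    (K : J → Type*) [∀ j, Field (K j)] [∀ j, Fintype (K j)] [∀ j, DecidableEq (K j)]
    [∀ j, Algebra k (K j)] [∀ j, FiniteDimensional k (K j)]
    (F : Type*) [Field F]
    (χ : ∀ j, (K j)ˣ →* Fˣ)
    (hχ : ∀ c : kˣ, ∏ j, χ j (Units.map (algebraMap k (K j)).toMonoidHom c) = 1)
    (ψ ψ' : AddChar k F)
    (hψ : ∃ a : k, ψ a ≠ 1) (hψ' : ∃ a : k, ψ' a ≠ 1) :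
    ∏ j, (-∑ a : (K j)ˣ, ((χ j a)⁻¹ : Fˣ) *
        ψ (Algebra.trace k (K j) (a : K j)))
      = ∏ j, (-∑ a : (K j)ˣ, ((χ j a)⁻¹ : Fˣ) *
        ψ' (Algebra.trace k (K j) (a : K j))) :=
  jacobi_sum_indep_of_add_char_general k K F χ hχ ψ ψ' hψ hψ'
end
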